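/- In the improved (one-logarithm-saving) variant where the last coordinate is kept as a real number and only the first m−1 coordinates are expanded: for a data point d and query q in ℝᵐ (with first m−1 coordinates encoded as equal-length bitstrings), the number of pairs (u⃗, same-last-coordinate-order) with u⃗ ∈ P0(d₁,…,d_{m−1}) ∩ P1(q₁,…,q_{m−1}) and d_m < q_m equals 1 if d is coordinate-wise dominated by q and 0 otherwise. -/

import Mathlib

open scoped Classical

/-- Numeric value of a bitstring, most significant bit first. -/
def bval (x : List Bool) : ℕ := x.foldl (fun n b => 2 * n + b.toNat) 0

/-- `P0 x` is the set of bitstrings `v` such that `v ++ [0]` is a prefix of `x`. -/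
def P0 (x : List Bool) : Set (List Bool) := {v | v ++ [false] <+: x}

/-- `P1 x` is the set of bitstrings `v` such that `v ++ [1]` is a prefix of `x`. -/
def P1 (x : List Bool) : Set (List Bool) := {v | v ++ [true] <+: x}

/-- Coordinate-wise `P0` on tuples of bitstrings (Cartesian product). -/
def P0v {m : ℕ} (x : Fin m → List Bool) : Set (Fin m → List Bool) := {v | ∀ i, v i ∈ P0 (x i)}

/-- Coordinate-wise `P1` on tuples of bitstrings (Cartesian product). -/
def P1v {m : ℕ} (x : Fin m → List Bool) : Set (Fin m → List Bool) := {v | ∀ i, v i ∈ P1 (x i)}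

lemma bval_foldl (n : ℕ) (x : List Bool) :
    x.foldl (fun n b => 2 * n + b.toNat) n = n * 2 ^ x.length + bval x := by
  induction x generalizing n with
  | nil => simp [bval]
  | cons b x ih =>
      simp only [List.foldl_cons, List.length_cons, bval]
      rw [ih, ih]
      ring

lemma bval_cons (b : Bool) (x : List Bool) :
    bval (b :: x) = b.toNat * 2 ^ x.length + bval x := by
  show x.foldl (fun n b => 2 * n + b.toNat) (2 * 0 + b.toNat) = _
  rw [bval_foldl]; ring_nf

lemma bval_lt (x : List Bool) : bval x < 2 ^ x.length := by
  induction x with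
  | nil => simp [bval]
  | cons b x ih =>
      rw [bval_cons]
      have : b.toNat ≤ 1 := Bool.toNat_le b
      simp only [List.length_cons, pow_succ]
      nlinarith

lemma exists_iff (x y : List Bool) (h : x.length = y.length) :
    (∃ v, v ++ [false] <+: x ∧ v ++ [true] <+: y) ↔ bval x < bval y := by
  induction x generalizing y with
  | nil =>
      cases y with
      | nil => simp [bval]
      | cons b y => simp at h
  | cons a x ih =>
      cases y with
      | nil => simp at h
      | cons b y =>
          have hL : x.length = y.length := by simpa using h
          have key : (∃ v, v ++ [false] <+: (a :: x) ∧ v ++ [true] <+: (b :: y)) ↔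
              ((a = false ∧ b = true) ∨
                (a = b ∧ ∃ v, v ++ [false] <+: x ∧ v ++ [true] <+: y)) := by
            constructor
            · rintro ⟨v, h1, h2⟩
              cases v with
              | nil =>
                  simp only [List.nil_append, List.cons_prefix_cons] at h1 h2
                  exact Or.inl ⟨h1.1.symm, h2.1.symm⟩
              | cons d v =>
                  rw [List.cons_append, List.cons_prefix_cons] at h1 h2
                  exact Or.inr ⟨h1.1.symm.trans h2.1, v, h1.2, h2.2⟩
            · rintro (⟨ha, hb⟩ | ⟨hab, v, h1, h2⟩)
              · exact ⟨[], by simp [ha], by simp [hb]⟩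
              · exact ⟨a :: v, by simp [List.cons_prefix_cons, h1],
                  by simp [List.cons_prefix_cons, hab, h2]⟩
          rw [key, ih y hL, bval_cons, bval_cons, hL]
          have h1 := bval_lt x
          have h2 := bval_lt y
          rw [hL] at h1
          cases a <;> cases b <;> simp <;> omega

lemma uniq {x y v w : List Bool} (hv1 : v ++ [false] <+: x) (hv2 : v ++ [true] <+: y)
    (hw1 : w ++ [false] <+: x) (hw2 : w ++ [true] <+: y) : v = w := by
  have contra : ∀ {v w : List Bool}, v ++ [false] <+: x → v ++ [true] <+: y →
      w ++ [false] <+: x → w ++ [true] <+: y → v.length < w.length → False := by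
    intro v w hv1 hv2 hw1 hw2 hlt
    have hvx : v.length < x.length := by
      have := hv1.length_le; simp at this; omega
    have hvy : v.length < y.length := by
      have := hv2.length_le; simp at this; omega
    have hx : x[v.length]'hvx = false := by
      have := hv1.getElem (i := v.length) (by simp)
      simpa using this.symm
    have hy : y[v.length]'hvy = true := by
      have := hv2.getElem (i := v.length) (by simp)
      simpa using this.symm
    have hwx : w <+: x := (List.prefix_append w [false]).trans hw1
    have hwy : w <+: y := (List.prefix_append w [true]).trans hw2
    have e1 : w[v.length]'hlt = x[v.length]'hvx := hwx.getElem hlt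
    have e2 : w[v.length]'hlt = y[v.length]'hvy := hwy.getElem hlt
    rw [hx] at e1; rw [hy] at e2
    rw [e1] at e2
    exact Bool.false_ne_true e2
  rcases lt_trichotomy v.length w.length with hlt | heq | hgt
  · exact absurd hlt (fun h => contra hv1 hv2 hw1 hw2 h)
  · have hle : (v ++ [false]).length ≤ (w ++ [false]).length := by simp [heq]
    have hpre : v ++ [false] <+: w ++ [false] :=
      List.prefix_of_prefix_length_le hv1 hw1 hle
    have : v ++ [false] = w ++ [false] :=
      List.IsPrefix.eq_of_length hpre (by simp [heq])
    exact List.append_inj_left' this (by simp)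
  · exact absurd hgt (fun h => contra hw1 hw2 hv1 hv2 h)

/-- Improved variant: the first `m` coordinates (`db`, `qb`) of a data point and a query are
in rank space (equal-length bitstrings); the last coordinates (`dr`, `qr`) remain reals. -/
theorem improved_variant_count (m : ℕ) (db qb : Fin m → List Bool) (dr qr : ℝ)
    (hlen : ∀ i, (db i).length = (qb i).length) :
    {u : Fin m → List Bool | u ∈ P0v db ∩ P1v qb ∧ dr < qr}.ncard =
      if (∀ i, bval (db i) < bval (qb i)) ∧ dr < qr then 1 else 0 := by
  by_cases hdr : dr < qr
  · by_cases hdom : ∀ i, bval (db i) < bval (qb i)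
    · rw [if_pos ⟨hdom, hdr⟩]
      have hex : ∀ i, ∃ v, v ++ [false] <+: db i ∧ v ++ [true] <+: qb i :=
        fun i => (exists_iff (db i) (qb i) (hlen i)).2 (hdom i)
      choose v hv0 hv1 using hex
      have : {u : Fin m → List Bool | u ∈ P0v db ∩ P1v qb ∧ dr < qr} = {v} := by
        ext u
        simp only [Set.mem_setOf_eq, Set.mem_inter_iff, Set.mem_singleton_iff]
        constructor
        · rintro ⟨⟨h0, h1⟩, -⟩
          funext i
          exact uniq (h0 i) (h1 i) (hv0 i) (hv1 i)
        · rintro rfl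
          exact ⟨⟨hv0, hv1⟩, hdr⟩
      rw [this, Set.ncard_singleton]
    · rw [if_neg (fun h => hdom h.1)]
      push_neg at hdom
      obtain ⟨i, hi⟩ := hdom
      have : {u : Fin m → List Bool | u ∈ P0v db ∩ P1v qb ∧ dr < qr} = ∅ := by
        ext u
        simp only [Set.mem_setOf_eq, Set.mem_inter_iff, Set.mem_empty_iff_false, iff_false]
        rintro ⟨⟨h0, h1⟩, -⟩
        exact absurd ((exists_iff (db i) (qb i) (hlen i)).1 ⟨u i, h0 i, h1 i⟩) (not_lt.2 hi)
      rw [this, Set.ncard_empty]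
  · rw [if_neg (fun h => hdr h.2)]
    have : {u : Fin m → List Bool | u ∈ P0v db ∩ P1v qb ∧ dr < qr} = ∅ := by
      ext u
      simp [hdr]
    rw [this, Set.ncard_empty]
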